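/- arXiv:1812.06643 — 3 statements merged into one kernel-verified Lean document; each statement's English description precedes it below -/
import Mathlib

section
/- For real a with |a| < 1, ∑_{j=1}^∞ (-1)^{j+1}/((2j-1) + (-1)^j a) = (π/4)·(1 + tan(πa/4))/(1 - tan(πa/4)). -/
/-!
With `b = (1 - a) / 4`, the terms of index `2k` and `2k + 1` add up to
`(1/(k + b) - 1/(k + 1 - b)) / 4`. These pair sums differ from the terms
`1/(b - (k + 1)) + 1/(b + (k + 1))` of the Mittag-Leffler expansion
`π cot(π b) = 1/b + ∑ₖ (1/(b - (k + 1)) + 1/(b + (k + 1)))` by the telescoping terms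
`1/(k + b) - 1/(k + 1 + b)`, which sum to `1/b`. Hence the series sums to
`(π / 4) cot(π / 4 - π a / 4)`, and the subtraction formula turns this into the tangent expression.
-/

open Real Filter Topology Finset

theorem Nat.tendsto_of_tendsto_comp_two_mul_of_tendsto_comp_two_mul_add_one {α : Type*}
    {u : ℕ → α} {l : Filter α} (h₀ : Tendsto (fun k ↦ u (2 * k)) atTop l)
    (h₁ : Tendsto (fun k ↦ u (2 * k + 1)) atTop l) : Tendsto u atTop l := by
  rw [tendsto_atTop'] at h₀ h₁ ⊢
  intro s hs
  obtain ⟨k₀, hk₀⟩ := h₀ s hs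
  obtain ⟨k₁, hk₁⟩ := h₁ s hs
  refine ⟨2 * max k₀ k₁, fun n hn ↦ ?_⟩
  obtain ⟨k, rfl | rfl⟩ := Nat.even_or_odd' n
  · exact hk₀ k (by omega)
  · exact hk₁ k (by omega)

theorem Finset.sum_range_two_mul {M : Type*} [AddCommMonoid M] (f : ℕ → M) (K : ℕ) :
    ∑ j ∈ range (2 * K), f j = ∑ k ∈ range K, (f (2 * k) + f (2 * k + 1)) := by
  induction K with
  | zero => simp
  | succ K ih => rw [Nat.mul_succ, sum_range_succ, sum_range_succ, sum_range_succ, ih, add_assoc]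

theorem tendsto_sum_range_of_tendsto_sum_pairs {M : Type*} [AddCommMonoid M] [TopologicalSpace M]
    [ContinuousAdd M] {f : ℕ → M} {l : M}
    (hpairs : Tendsto (fun K ↦ ∑ k ∈ range K, (f (2 * k) + f (2 * k + 1))) atTop (𝓝 l))
    (heven : Tendsto (fun k ↦ f (2 * k)) atTop (𝓝 0)) :
    Tendsto (fun N ↦ ∑ j ∈ range N, f j) atTop (𝓝 l) := by
  have h₀ : Tendsto (fun K ↦ ∑ j ∈ range (2 * K), f j) atTop (𝓝 l) := by
    simpa only [sum_range_two_mul] using hpairs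
  refine Nat.tendsto_of_tendsto_comp_two_mul_of_tendsto_comp_two_mul_add_one h₀ ?_
  simpa only [sum_range_succ, add_zero] using h₀.add heven

theorem tendsto_one_div_natCast_add_nhds_zero {𝕜 : Type*} [NormedField 𝕜] [NormSMulClass ℤ 𝕜]
    (x : 𝕜) : Tendsto (fun K : ℕ ↦ 1 / ((K : 𝕜) + x)) atTop (𝓝 0) := by
  simpa only [one_div, Function.comp_def] using tendsto_inv₀_cobounded.comp
    ((tendsto_add_const_cobounded x).comp tendsto_natCast_atTop_cobounded)

theorem Complex.tendsto_sum_range_one_div_add_sub_one_div_add_one_sub {x : ℂ}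
    (hx : x ∈ integerComplement) :
    Tendsto (fun K : ℕ ↦ ∑ k ∈ range K, (1 / (k + x) - 1 / (k + 1 - x))) atTop
      (𝓝 (π * cot (π * x))) := by
  have hterm (k : ℕ) : 1 / ((k : ℂ) + x) - 1 / (k + 1 - x) =
      cotTerm x k + (1 / (k + x) - 1 / (((k + 1 : ℕ) : ℂ) + x)) := by
    rw [cotTerm, show x - (k + 1) = -(k + 1 - x) by ring, div_neg]
    push_cast
    ring
  simp only [hterm, sum_add_distrib, sum_range_sub' (fun k : ℕ ↦ 1 / ((k : ℂ) + x)),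
    Nat.cast_zero, zero_add]
  have h := (tendsto_logDeriv_euler_cot_sub hx).add
    ((tendsto_const_nhds (x := 1 / x)).sub (tendsto_one_div_natCast_add_nhds_zero x))
  rw [sub_zero, sub_add_cancel] at h
  simpa only [sum_add_distrib] using h

theorem Real.tendsto_sum_range_one_div_add_sub_one_div_add_one_sub {b : ℝ}
    (hb : ∀ n : ℤ, (n : ℝ) ≠ b) :
    Tendsto (fun K : ℕ ↦ ∑ k ∈ range K, (1 / (k + b) - 1 / (k + 1 - b))) atTop
      (𝓝 (π * cot (π * b))) := by
  have hb' : (b : ℂ) ∈ Complex.integerComplement := fun ⟨n, hn⟩ ↦ hb n (by exact_mod_cast hn)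
  rw [← tendsto_ofReal_iff]
  push_cast [Complex.ofReal_cot]
  exact Complex.tendsto_sum_range_one_div_add_sub_one_div_add_one_sub hb'

theorem Real.cot_pi_div_four_sub {x : ℝ} (hx : cos x ≠ 0) :
    cot (π / 4 - x) = (1 + tan x) / (1 - tan x) := by
  have hs : √2 / 2 ≠ 0 := by positivity
  rw [cot_eq_cos_div_sin, cos_sub, sin_sub, cos_pi_div_four, sin_pi_div_four, ← mul_add,
    ← mul_sub, mul_div_mul_left _ _ hs, tan_eq_sin_div_cos, one_add_div hx, one_sub_div hx,
    div_div_div_cancel_right₀ hx]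

noncomputable def alternatingTerm (a : ℝ) (j : ℕ) : ℝ :=
  (-1) ^ j / ((2 * (j : ℝ) + 1) - (-1) ^ j * a)

theorem alternatingTerm_two_mul (a : ℝ) (k : ℕ) :
    alternatingTerm a (2 * k) = 4⁻¹ * (1 / (k + (1 - a) / 4)) := by
  rw [alternatingTerm, pow_mul, neg_one_sq, one_pow, one_mul,
    show 2 * ((2 * k : ℕ) : ℝ) + 1 - a = 4 * (k + (1 - a) / 4) by push_cast; ring]
  simp only [div_eq_mul_inv, mul_inv, one_mul]

theorem alternatingTerm_two_mul_add_one (a : ℝ) (k : ℕ) :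
    alternatingTerm a (2 * k + 1) = -(4⁻¹ * (1 / (k + 1 - (1 - a) / 4))) := by
  rw [alternatingTerm, pow_succ, pow_mul, neg_one_sq, one_pow, one_mul,
    show 2 * ((2 * k + 1 : ℕ) : ℝ) + 1 - -1 * a = 4 * (k + 1 - (1 - a) / 4) by push_cast; ring]
  simp only [div_eq_mul_inv, mul_inv, neg_one_mul, one_mul]

theorem alternating_series_strip_exit (a : ℝ) (ha : |a| < 1) :
    Tendsto (fun N => ∑ j ∈ Finset.range N, (-1 : ℝ) ^ j / ((2 * (j : ℝ) + 1) - (-1) ^ j * a))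
      atTop (𝓝 ((π / 4) * (1 + Real.tan (π * a / 4)) / (1 - Real.tan (π * a / 4)))) := by
  obtain ⟨ha₁, ha₂⟩ := abs_lt.mp ha
  have hb (n : ℤ) : (n : ℝ) ≠ (1 - a) / 4 := by
    rintro hn
    have : (0 : ℝ) < n ∧ (n : ℝ) < 1 := ⟨by linarith, by linarith⟩
    norm_cast at this
    omega
  have hcos : cos (π * a / 4) ≠ 0 := by
    refine (cos_pos_of_mem_Ioo ⟨?_, ?_⟩).ne' <;> nlinarith [pi_pos]
  have hvalue : (π / 4) * (1 + tan (π * a / 4)) / (1 - tan (π * a / 4)) =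
      4⁻¹ * (π * cot (π * ((1 - a) / 4))) := by
    rw [show π * ((1 - a) / 4) = π / 4 - π * a / 4 by ring, cot_pi_div_four_sub hcos]
    ring
  rw [hvalue]
  refine tendsto_sum_range_of_tendsto_sum_pairs (f := alternatingTerm a) ?_ ?_
  · simp only [alternatingTerm_two_mul, alternatingTerm_two_mul_add_one, ← sub_eq_add_neg,
      ← mul_sub, ← mul_sum]
    exact (tendsto_sum_range_one_div_add_sub_one_div_add_one_sub hb).const_mul _
  · simpa only [alternatingTerm_two_mul, mul_zero] using
      (tendsto_one_div_natCast_add_nhds_zero ((1 - a) / 4)).const_mul 4⁻¹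
end

section
/- The map z ↦ tan z sends the vertical strip {z ∈ ℂ : -π/4 < Re z < π/4} bijectively onto the open unit disk {|z| < 1}, and is holomorphic there. -/
/-!
On the strip, `‖cos z‖² - ‖sin z‖² = cos (2 Re z) > 0`, so `tan` maps it into the unit disk and
has no poles there. The inverse is the principal branch
`arctan w = -(i/2) log ((1 + i w) / (1 - i w))`: for `‖w‖ < 1` the Cayley transform
`(1 + i w) / (1 - i w)` lies in the right half-plane, so its argument lies in `(-π/2, π/2)` and
`Re (arctan w) = arg (…) / 2` lies in `(-π/4, π/4)`.
-/

open Complex Real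

namespace Complex

theorem normSq_cos_sub_normSq_sin (z : ℂ) :
    normSq (cos z) - normSq (sin z) = Real.cos (2 * z.re) := by
  rw [cos_eq z, sin_eq z, Real.cos_two_mul']
  simp only [normSq_apply, add_re, add_im, sub_re, sub_im, mul_re, mul_im, I_re, I_im,
    ofReal_re, ofReal_im, ← ofReal_sin, ← ofReal_cos, ← ofReal_sinh, ← ofReal_cosh]
  linear_combination (Real.cos z.re ^ 2 - Real.sin z.re ^ 2) * Real.cosh_sq_sub_sinh_sq z.im

theorem norm_sin_lt_norm_cos {z : ℂ} (h : 0 < Real.cos (2 * z.re)) :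
    ‖sin z‖ < ‖cos z‖ := by
  rw [← normSq_cos_sub_normSq_sin, sub_pos, normSq_eq_norm_sq, normSq_eq_norm_sq] at h
  exact lt_of_pow_lt_pow_left₀ 2 (norm_nonneg _) h

theorem norm_tan_lt_one {z : ℂ} (h : 0 < Real.cos (2 * z.re)) : ‖tan z‖ < 1 := by
  have hsc := norm_sin_lt_norm_cos h
  rw [tan_eq_sin_div_cos, norm_div, div_lt_one ((norm_nonneg _).trans_lt hsc)]
  exact hsc

theorem cos_ne_zero_of_cos_two_mul_re_pos {z : ℂ} (h : 0 < Real.cos (2 * z.re)) : cos z ≠ 0 :=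
  norm_pos_iff.mp ((norm_nonneg _).trans_lt (norm_sin_lt_norm_cos h))

theorem arctan_tan_of_abs_re_lt {z : ℂ} (h : |z.re| < π / 2) : arctan (tan z) = z := by
  obtain ⟨h₁, h₂⟩ := abs_lt.mp h
  refine arctan_tan (fun hz => h₂.ne ?_) h₁ h₂.le
  simp [hz]

theorem re_one_add_div_one_sub_pos {a : ℂ} (ha : ‖a‖ < 1) : 0 < ((1 + a) / (1 - a)).re := by
  have hsub : 1 - a ≠ 0 := fun h => by
    rw [← sub_eq_zero.mp h, norm_one] at ha
    exact ha.false
  have hnormSq : normSq a < 1 := by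
    rw [normSq_eq_norm_sq]
    nlinarith [norm_nonneg a]
  rw [div_re, ← add_div]
  refine div_pos ?_ (normSq_pos.mpr hsub)
  simp only [normSq_apply, add_re, add_im, sub_re, sub_im, one_re, one_im] at hnormSq ⊢
  nlinarith

theorem re_arctan (w : ℂ) : (arctan w).re = arg ((1 + w * I) / (1 - w * I)) / 2 := by
  simp only [arctan, mul_re, div_ofNat_re, neg_re, I_re, neg_zero, zero_div, zero_mul,
    div_ofNat_im, neg_im, I_im, log_im, zero_sub]
  ring

theorem abs_re_arctan_lt {w : ℂ} (hw : ‖w‖ < 1) : |(arctan w).re| < π / 4 := by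
  have hpos := re_one_add_div_one_sub_pos (a := w * I) (by simpa using hw)
  have harg := abs_arg_lt_pi_div_two_iff.mpr (Or.inl hpos)
  rw [re_arctan, abs_div, abs_two]
  linarith

end Complex

theorem tan_conformal_strip_to_disk :
    Set.BijOn Complex.tan {z : ℂ | -(π / 4) < z.re ∧ z.re < π / 4}
      {z : ℂ | ‖z‖ < 1} ∧
    DifferentiableOn ℂ Complex.tan {z : ℂ | -(π / 4) < z.re ∧ z.re < π / 4} := by
  set S := {z : ℂ | -(π / 4) < z.re ∧ z.re < π / 4}
  have hcos : ∀ z ∈ S, 0 < Real.cos (2 * z.re) := fun z hz =>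
    Real.cos_pos_of_mem_Ioo ⟨by linarith [hz.1], by linarith [hz.2]⟩
  have hinv : Set.InvOn Complex.arctan Complex.tan S {w | ‖w‖ < 1} := by
    refine ⟨fun z hz => arctan_tan_of_abs_re_lt (abs_lt.mpr ⟨?_, ?_⟩), fun w hw => ?_⟩
    · linarith [hz.1, pi_pos]
    · linarith [hz.2, pi_pos]
    · refine tan_arctan ?_ ?_ <;> rintro rfl <;> simp at hw
  refine ⟨hinv.bijOn (fun z hz => norm_tan_lt_one (hcos z hz))
    (fun w hw => abs_lt.mp (abs_re_arctan_lt hw)), fun z hz => ?_⟩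
  have hcos_ne := cos_ne_zero_of_cos_two_mul_re_pos (hcos z hz)
  exact (differentiableAt_tan.mpr hcos_ne).differentiableWithinAt
end

section
/- For a fixed point a = x + iy with y > 0 in the upper half-plane and z in the upper half-plane, the integral ∫_0^∞ (1/(2πt))(e^{-|a-z|²/(2t)} - e^{-|a - conj(z)|²/(2t)}) dt equals (1/π)·ln(|a - conj(z)|/|a - z|). -/
/-!
The substitution `t = 1/u` (which preserves `dt/t`) turns the integral into `1/(2π)` times
Frullani's integral `∫₀^∞ (e^{-αu} - e^{-βu}) du/u = log (β/α)` with `α = |a - z|²/2` and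
`β = |a - z̄|²/2`. Both are positive: `a ≠ z`, and `a`, `z̄` lie in opposite open half-planes.
-/

open Real MeasureTheory Set

lemma integrableOn_Ioi_inv_mul_exp_neg_mul_sub {A B : ℝ} (hA : 0 < A) (hB : 0 < B) :
    IntegrableOn (fun u => u⁻¹ * (rexp (-(A * u)) - rexp (-(B * u)))) (Ioi 0) := by
  wlog hAB : A ≤ B generalizing A B
  · exact (this hB hA (le_of_not_ge hAB)).neg.congr_fun
      (fun u _ => by simp only [Pi.neg_apply]; ring) measurableSet_Ioi
  -- `0 ≤ u⁻¹ (e^{-Au} - e^{-Bu}) ≤ (B - A) e^{-Au}`, from `1 - x ≤ e^{-x}`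
  refine ((exp_neg_integrableOn_Ioi 0 hA).const_mul (B - A)).mono' (by fun_prop) ?_
  filter_upwards [ae_restrict_mem measurableSet_Ioi] with u (hu : 0 < u)
  have hsplit : rexp (-(B * u)) = rexp (-(A * u)) * rexp (-((B - A) * u)) := by
    rw [← Real.exp_add]; ring_nf
  have hlin := one_sub_le_exp_neg ((B - A) * u)
  have hmono : rexp (-(B * u)) ≤ rexp (-(A * u)) := exp_le_exp.2 (by nlinarith)
  rw [Real.norm_of_nonneg (mul_nonneg (inv_nonneg.2 hu.le) (sub_nonneg.2 hmono)),
    inv_mul_le_iff₀ hu, hsplit, neg_mul]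
  nlinarith [exp_pos (-(A * u))]

lemma integral_Ioi_inv_mul_exp_neg_mul_sub {A B : ℝ} (hA : 0 < A) (hB : 0 < B) :
    ∫ u in Ioi 0, u⁻¹ * (rexp (-(A * u)) - rexp (-(B * u))) = log (B / A) := by
  have hcont : Continuous fun x => rexp (-x) := by fun_prop
  simpa using Frullani.integral_Ioi_eq (L := 1) (R := 0)
    (hcont.locallyIntegrable.locallyIntegrableOn _) hA hB
    (by simpa using (hcont.tendsto 0).mono_left nhdsWithin_le_nhds)
    tendsto_exp_neg_atTop_nhds_zero (integrableOn_Ioi_inv_mul_exp_neg_mul_sub hA hB)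

lemma integral_Ioi_inv_smul_comp_inv {E : Type*} [NormedAddCommGroup E] [NormedSpace ℝ E]
    (f : ℝ → E) : ∫ t in Ioi 0, t⁻¹ • f t⁻¹ = ∫ u in Ioi 0, u⁻¹ • f u := by
  rw [← integral_comp_rpow_Ioi (fun u => u⁻¹ • f u) (p := -1) (by norm_num)]
  refine setIntegral_congr_fun measurableSet_Ioi fun t (ht : 0 < t) => ?_
  simp only [rpow_neg_one, smul_smul]
  congr 1
  rw [show (-1 : ℝ) - 1 = -2 by norm_num, rpow_neg ht.le, rpow_two, abs_neg, abs_one]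
  field_simp

lemma integral_Ioi_inv_mul_exp_neg_div_sub {A B : ℝ} (hA : 0 < A) (hB : 0 < B) :
    ∫ t in Ioi 0, t⁻¹ * (rexp (-(A / t)) - rexp (-(B / t))) = log (B / A) := by
  simpa [div_eq_mul_inv] using (integral_Ioi_inv_smul_comp_inv
    fun u => rexp (-(A * u)) - rexp (-(B * u))).trans (integral_Ioi_inv_mul_exp_neg_mul_sub hA hB)

lemma norm_sub_conj_pos {a z : ℂ} (h : a.im + z.im ≠ 0) :
    0 < ‖a - (starRingEnd ℂ) z‖ :=
  norm_pos_iff.2 fun heq => by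
    have := congrArg Complex.im heq
    simp only [Complex.sub_im, Complex.conj_im, sub_neg_eq_add, Complex.zero_im] at this
    exact h this

theorem greens_function_half_plane (a z : ℂ) (ha : 0 < a.im) (hz : 0 < z.im) (hne : a ≠ z) :
    ∫ t in Set.Ioi (0 : ℝ),
        (1 / (2 * π * t)) *
          (Real.exp (-(‖a - z‖) ^ 2 / (2 * t)) -
            Real.exp (-(‖a - (starRingEnd ℂ) z‖) ^ 2 / (2 * t)))
      = (1 / π) * Real.log (‖a - (starRingEnd ℂ) z‖ / ‖a - z‖) := by
  have hA : 0 < ‖a - z‖ := norm_pos_iff.2 (sub_ne_zero.2 hne)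
  have hB := norm_sub_conj_pos (add_pos ha hz).ne'
  calc _ = ∫ t in Ioi 0, (2 * π)⁻¹ * (t⁻¹ * (rexp (-(‖a - z‖ ^ 2 / 2 / t)) -
              rexp (-(‖a - (starRingEnd ℂ) z‖ ^ 2 / 2 / t)))) := by
        congr 1; ext t; ring_nf
    _ = (2 * π)⁻¹ * log ((‖a - (starRingEnd ℂ) z‖ / ‖a - z‖) ^ 2) := by
        rw [integral_const_mul,
          integral_Ioi_inv_mul_exp_neg_div_sub (by positivity) (by positivity)]
        ring_nf
    _ = _ := by
        rw [log_pow]; push_cast; ring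
end
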